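/- (RK under multiplicative noise, via perturbation theory.) Let A ∈ ℝ^{m×n}, E ∈ ℝ^{m×m}, F ∈ ℝ^{n×n} with I_m + E and I_n + F invertible, and Ã := (I_m + E) A (I_n + F) with every row ã_i nonzero. Let x_LS satisfy A x_LS = b and x_LS ∈ range(Aᵀ) with b ≠ 0; let σ > 0 satisfy ‖A z‖ ≥ σ‖z‖ for every z ∈ range(Aᵀ), and σ̃ > 0 satisfy ‖Ã z‖ ≥ σ̃‖z‖ for every z ∈ range(Ãᵀ). Let ε ∈ ℝ^m, b̃ := b + ε, and assume the noisy system is consistent with minimum-norm solution x_NLS (Ã x_NLS = b̃, x_NLS ∈ range(Ãᵀ)). Set p_i := ‖ã_i‖²/‖Ã‖_F², K_i(x) := x − ((⟨ã_i, x⟩ − b̃_i)/‖ã_i‖²) ã_i, and let x_0 ∈ range(Ãᵀ). Define e_1 := sqrt(‖F‖² + ‖(I_n+F)^{-1}F‖²) and e_2 := (1 + e_1)(‖ε‖/‖b‖ + (1 + ‖ε‖/‖b‖) sqrt(‖E‖² + ‖(I_m+E)^{-1}E‖²)). Then for every k ≥ 0, Σ_{(i_1,…,i_k) ∈ {1,…,m}^k}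 p_{i_1}⋯p_{i_k} ‖K_{i_k}(⋯K_{i_1}(x_0)⋯) − x_LS‖ ≤ (1 − σ̃²/‖Ã‖_F²)^{k/2} ‖x_0 − x_NLS‖ + e_1 ‖x_LS‖ + e_2 ‖b‖/σ. -/

import Mathlib

open Matrix
open scoped RealInnerProductSpace

/-- The `i`-th row of a matrix, viewed as a vector in Euclidean space. -/
noncomputable def row {m n : ℕ} (M : Matrix (Fin m) (Fin n) ℝ) (i : Fin m) :
    EuclideanSpace ℝ (Fin n) :=
  (WithLp.equiv 2 (Fin n → ℝ)).symm (M i)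

/-- Matrix-vector multiplication as a map between Euclidean spaces. -/
noncomputable def mulVecE {m n : ℕ} (M : Matrix (Fin m) (Fin n) ℝ)
    (x : EuclideanSpace ℝ (Fin n)) : EuclideanSpace ℝ (Fin m) :=
  Matrix.toEuclideanLin M x

/-- The Kaczmarz update of `x` for the system `M y = c`, using row `i`:
`x ↦ x - ((⟨mᵢ, x⟩ - cᵢ)/‖mᵢ‖²) mᵢ`. -/
noncomputable def kaczmarz {m n : ℕ} (M : Matrix (Fin m) (Fin n) ℝ) (c : Fin m → ℝ) (i : Fin m)
    (x : EuclideanSpace ℝ (Fin n)) : EuclideanSpace ℝ (Fin n) :=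
  x - ((⟪_root_.row M i, x⟫ - c i) / ‖_root_.row M i‖ ^ 2) • _root_.row M i

/-- Iterated Kaczmarz updates along the index sequence `is = (i₁, …, i_k)`,
applying row `i₁` first: `K_{i_k}(⋯ K_{i₁}(x₀) ⋯)`. -/
noncomputable def kaczmarzIter {m n k : ℕ} (M : Matrix (Fin m) (Fin n) ℝ) (c : Fin m → ℝ)
    (is : Fin k → Fin m) (x0 : EuclideanSpace ℝ (Fin n)) : EuclideanSpace ℝ (Fin n) :=
  (List.ofFn is).foldl (fun x i => kaczmarz M c i x) x0

/-- The squared Frobenius norm `‖M‖_F² = Σ_{i,j} M_{ij}²`. -/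
noncomputable def frobSq {m n : ℕ} (M : Matrix (Fin m) (Fin n) ℝ) : ℝ :=
  ∑ i, ∑ j, (M i j) ^ 2

/-- The row space `range(Mᵀ)` of a matrix, as a submodule of Euclidean space. -/
noncomputable def rowSpace {m n : ℕ} (M : Matrix (Fin m) (Fin n) ℝ) :
    Submodule ℝ (EuclideanSpace ℝ (Fin n)) :=
  LinearMap.range (Matrix.toEuclideanLin Mᵀ)

/-- The spectral norm (operator 2-norm) of a matrix. -/
noncomputable def specNorm {m n : ℕ} (M : Matrix (Fin m) (Fin n) ℝ) : ℝ :=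
  ‖LinearMap.toContinuousLinearMap (Matrix.toEuclideanLin M)‖

/-!
Split `x_k - x_LS = (x_k - x_NLS) + (x_NLS - x_LS)`.

The first part is randomized Kaczmarz on the consistent system `Ã x = b̃`: as long as the error
stays in `range(Ãᵀ)`, one step multiplies `E‖x - x_NLS‖²` by at most `1 - σ̃²/‖Ã‖_F²`, and
Jensen's inequality turns this bound on second moments into one on `E‖x_k - x_NLS‖`.

The second part is deterministic. The point `u = P_{range Aᵀ}((I + F) x_NLS)` solves
`A u = (I + E)⁻¹ b̃`, so `σ ‖u - x_LS‖ ≤ ‖(I + E)⁻¹ b̃ - b‖`. Moreover `x_NLS` is the minimum-norm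
solution of `A (I + F) x = A u`, and `x_NLS - u` splits orthogonally into a part inside
`range(Ãᵀ)`, of norm at most `‖(I + F)⁻¹ F‖ ‖u‖`, and a part outside it, of norm at most `‖F‖ ‖u‖`.
-/

theorem sum_prod_mul_foldl_le_pow_mul {ι X : Type*} [Fintype ι] {p : ι → ℝ} (hp : ∀ i, 0 ≤ p i)
    {T : ι → X → X} {V : X → ℝ} {S : Set X} (hS : ∀ i, ∀ x ∈ S, T i x ∈ S) {δ : ℝ} (hδ : 0 ≤ δ)
    (hV : ∀ x ∈ S, ∑ i, p i * V (T i x) ≤ δ * V x) (k : ℕ) {x : X} (hx : x ∈ S) :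
    ∑ is : Fin k → ι, (∏ j, p (is j)) * V ((List.ofFn is).foldl (fun y i => T i y) x)
      ≤ δ ^ k * V x := by
  induction k generalizing x with
  | zero => simp
  | succ k ih =>
    have hsplit : ∑ is : Fin (k + 1) → ι,
        (∏ j, p (is j)) * V ((List.ofFn is).foldl (fun y i => T i y) x)
        = ∑ i, p i * ∑ is : Fin k → ι,
          (∏ j, p (is j)) * V ((List.ofFn is).foldl (fun y i => T i y) (T i x)) := by
      rw [← (Fin.consEquiv fun _ => ι).sum_comp, Fintype.sum_prod_type]
      simp [Fin.consEquiv, Fin.prod_univ_succ, List.ofFn_succ, Finset.mul_sum, mul_assoc]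
    calc _ = _ := hsplit
      _ ≤ ∑ i, p i * (δ ^ k * V (T i x)) :=
          Finset.sum_le_sum fun i _ => mul_le_mul_of_nonneg_left (ih (hS i x hx)) (hp i)
      _ = δ ^ k * ∑ i, p i * V (T i x) := by
          rw [Finset.mul_sum]; exact Finset.sum_congr rfl fun i _ => by ring
      _ ≤ δ ^ k * (δ * V x) := mul_le_mul_of_nonneg_left (hV x hx) (pow_nonneg hδ k)
      _ = δ ^ (k + 1) * V x := by ring

theorem sum_mul_le_sqrt_sum_mul_sq {ι : Type*} [Fintype ι] {w : ι → ℝ} (hw : ∀ i, 0 ≤ w i)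
    (hw1 : ∑ i, w i = 1) (v : ι → ℝ) : ∑ i, w i * v i ≤ Real.sqrt (∑ i, w i * v i ^ 2) := by
  refine Real.le_sqrt_of_sq_le ?_
  have h := Finset.sum_sq_le_sum_mul_sum_of_sq_le_mul Finset.univ (fun i _ => hw i)
    (fun i _ => mul_nonneg (hw i) (sq_nonneg (v i))) (r := fun i => w i * v i)
    (fun i _ => le_of_eq (by ring))
  rwa [hw1, one_mul] at h

theorem sum_mul_norm_sub_le {ι E : Type*} [Fintype ι] [SeminormedAddCommGroup E] {w : ι → ℝ}
    (hw : ∀ i, 0 ≤ w i) (hw1 : ∑ i, w i = 1) (y : ι → E) (a b : E) :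
    ∑ i, w i * ‖y i - a‖ ≤ ∑ i, w i * ‖y i - b‖ + ‖b - a‖ := by
  calc ∑ i, w i * ‖y i - a‖ ≤ ∑ i, w i * (‖y i - b‖ + ‖b - a‖) :=
        Finset.sum_le_sum fun i _ =>
          mul_le_mul_of_nonneg_left (norm_sub_le_norm_sub_add_norm_sub _ _ _) (hw i)
    _ = ∑ i, w i * ‖y i - b‖ + ‖b - a‖ := by
        simp only [mul_add, Finset.sum_add_distrib, ← Finset.sum_mul, hw1, one_mul]

/-- Thanks to `x / 0 = 0` this also holds for `a = 0`, where the projection step is the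
identity. -/
theorem sq_norm_mul_sq_norm_sub_inner_div_smul {E : Type*} [NormedAddCommGroup E]
    [InnerProductSpace ℝ E] (a e : E) :
    ‖a‖ ^ 2 * ‖e - (⟪a, e⟫ / ‖a‖ ^ 2) • a‖ ^ 2 = ‖a‖ ^ 2 * ‖e‖ ^ 2 - ⟪a, e⟫ ^ 2 := by
  rcases eq_or_ne a 0 with rfl | ha
  · simp
  · have : ‖a‖ ≠ 0 := norm_ne_zero_iff.mpr ha
    rw [norm_sub_sq_real, real_inner_smul_right, norm_smul, Real.norm_eq_abs, mul_pow, sq_abs,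
      real_inner_comm e a]
    field_simp
    ring

theorem Matrix.inv_one_add_eq_one_sub {n R : Type*} [Fintype n] [DecidableEq n] [CommRing R]
    {E : Matrix n n R} (hE : IsUnit (1 + E)) : (1 + E)⁻¹ = 1 - (1 + E)⁻¹ * E := by
  have h := Matrix.nonsing_inv_mul (1 + E) ((Matrix.isUnit_iff_isUnit_det _).mp hE)
  rw [Matrix.mul_add, Matrix.mul_one] at h
  exact eq_sub_of_add_eq h

section MatrixVector

variable {m n p : ℕ}

theorem inner_row_eq_mulVecE (M : Matrix (Fin m) (Fin n) ℝ) (x : EuclideanSpace ℝ (Fin n))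
    (i : Fin m) : ⟪_root_.row M i, x⟫ = mulVecE M x i := by
  simp [_root_.row, mulVecE, PiLp.inner_apply, Matrix.mulVec, dotProduct, mul_comm]

theorem mulVecE_sub (M : Matrix (Fin m) (Fin n) ℝ) (x y : EuclideanSpace ℝ (Fin n)) :
    mulVecE M (x - y) = mulVecE M x - mulVecE M y :=
  map_sub _ x y

theorem mulVecE_mul (M : Matrix (Fin m) (Fin n) ℝ) (N : Matrix (Fin n) (Fin p) ℝ)
    (x : EuclideanSpace ℝ (Fin p)) : mulVecE (M * N) x = mulVecE M (mulVecE N x) := by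
  simp [mulVecE]

theorem one_add_mulVecE (F : Matrix (Fin n) (Fin n) ℝ) (x : EuclideanSpace ℝ (Fin n)) :
    mulVecE (1 + F) x = x + mulVecE F x := by
  simp [mulVecE]

theorem one_sub_mulVecE (F : Matrix (Fin n) (Fin n) ℝ) (x : EuclideanSpace ℝ (Fin n)) :
    mulVecE (1 - F) x = x - mulVecE F x := by
  simp [mulVecE]

theorem norm_mulVecE_le (M : Matrix (Fin m) (Fin n) ℝ) (x : EuclideanSpace ℝ (Fin n)) :
    ‖mulVecE M x‖ ≤ specNorm M * ‖x‖ :=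
  (LinearMap.toContinuousLinearMap (Matrix.toEuclideanLin M)).le_opNorm x

theorem rowSpace_eq_orthogonal_ker (M : Matrix (Fin m) (Fin n) ℝ) :
    rowSpace M = (LinearMap.ker (Matrix.toEuclideanLin M))ᗮ := by
  rw [LinearMap.orthogonal_ker, ← Matrix.toEuclideanLin_conjTranspose_eq_adjoint,
    Matrix.conjTranspose_eq_transpose_of_trivial]
  rfl

theorem mem_orthogonal_rowSpace_iff (M : Matrix (Fin m) (Fin n) ℝ) (z : EuclideanSpace ℝ (Fin n)) :
    z ∈ (rowSpace M)ᗮ ↔ mulVecE M z = 0 := by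
  rw [rowSpace_eq_orthogonal_ker, Submodule.orthogonal_orthogonal]
  rfl

theorem row_mem_rowSpace (M : Matrix (Fin m) (Fin n) ℝ) (i : Fin m) :
    _root_.row M i ∈ rowSpace M := by
  rw [rowSpace_eq_orthogonal_ker]
  intro z (hz : mulVecE M z = 0)
  rw [real_inner_comm, inner_row_eq_mulVecE, hz]
  rfl

theorem rowSpace_mul_of_isUnit {P : Matrix (Fin m) (Fin m) ℝ} (hP : IsUnit P)
    (M : Matrix (Fin m) (Fin n) ℝ) : rowSpace (P * M) = rowSpace M := by
  rw [rowSpace_eq_orthogonal_ker, rowSpace_eq_orthogonal_ker]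
  congr 1
  ext z
  change mulVecE (P * M) z = 0 ↔ mulVecE M z = 0
  refine ⟨fun h => ?_, fun h => by rw [mulVecE_mul, h]; exact map_zero _⟩
  rw [← Matrix.one_mul M, ← Matrix.nonsing_inv_mul P ((Matrix.isUnit_iff_isUnit_det P).mp hP),
    Matrix.mul_assoc, mulVecE_mul, h]
  exact map_zero _

theorem mulVecE_starProjection_rowSpace (M : Matrix (Fin m) (Fin n) ℝ)
    (x : EuclideanSpace ℝ (Fin n)) :
    mulVecE M ((rowSpace M).starProjection x) = mulVecE M x := by
  have h := (mem_orthogonal_rowSpace_iff M _).mp ((rowSpace M).sub_starProjection_mem_orthogonal x)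
  rw [mulVecE_sub, sub_eq_zero] at h
  exact h.symm

end MatrixVector

section Frobenius

variable {m n : ℕ} (M : Matrix (Fin m) (Fin n) ℝ)

theorem frobSq_eq_sum_sq_norm_row : frobSq M = ∑ i, ‖_root_.row M i‖ ^ 2 := by
  simp only [frobSq, EuclideanSpace.real_norm_sq_eq]
  rfl

theorem sq_norm_mulVecE_eq_sum (z : EuclideanSpace ℝ (Fin n)) :
    ‖mulVecE M z‖ ^ 2 = ∑ i, ⟪_root_.row M i, z⟫ ^ 2 := by
  simp only [EuclideanSpace.real_norm_sq_eq, inner_row_eq_mulVecE]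

theorem sq_norm_mulVecE_le (z : EuclideanSpace ℝ (Fin n)) :
    ‖mulVecE M z‖ ^ 2 ≤ frobSq M * ‖z‖ ^ 2 := by
  rw [sq_norm_mulVecE_eq_sum, frobSq_eq_sum_sq_norm_row, Finset.sum_mul]
  refine Finset.sum_le_sum fun i _ => ?_
  rw [← mul_pow, ← sq_abs]
  exact pow_le_pow_left₀ (abs_nonneg _) (abs_real_inner_le_norm _ _) 2

variable {M}

theorem exists_row_ne_zero (hM : M ≠ 0) : ∃ i, _root_.row M i ≠ 0 := by
  by_contra! h
  exact hM (Matrix.ext fun i j => congrArg (· j) (h i))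

theorem frobSq_pos (hM : M ≠ 0) : 0 < frobSq M := by
  obtain ⟨i, hi⟩ := exists_row_ne_zero hM
  rw [frobSq_eq_sum_sq_norm_row]
  exact (pow_pos (norm_pos_iff.mpr hi) 2).trans_le
    (Finset.single_le_sum (fun j _ => sq_nonneg ‖_root_.row M j‖) (Finset.mem_univ i))

theorem sq_le_frobSq (hM : M ≠ 0) {σ : ℝ} (hσ : 0 ≤ σ)
    (hσM : ∀ z ∈ rowSpace M, σ * ‖z‖ ≤ ‖mulVecE M z‖) : σ ^ 2 ≤ frobSq M := by
  obtain ⟨i, hi⟩ := exists_row_ne_zero hM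
  have hr : 0 < ‖_root_.row M i‖ ^ 2 := pow_pos (norm_pos_iff.mpr hi) 2
  have h := pow_le_pow_left₀ (by positivity) (hσM _ (row_mem_rowSpace M i)) 2
  rw [mul_pow] at h
  exact le_of_mul_le_mul_right (h.trans (sq_norm_mulVecE_le M _)) hr

theorem sum_prod_row_weights_eq_one (hM : M ≠ 0) (k : ℕ) :
    ∑ is : Fin k → Fin m, ∏ j, ‖_root_.row M (is j)‖ ^ 2 / frobSq M = 1 := by
  rw [← Fintype.sum_pow (fun i => ‖_root_.row M i‖ ^ 2 / frobSq M), ← Finset.sum_div,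
    ← frobSq_eq_sum_sq_norm_row, div_self (frobSq_pos hM).ne', one_pow]

end Frobenius

section Kaczmarz

variable {m n : ℕ} {M : Matrix (Fin m) (Fin n) ℝ} {c : Fin m → ℝ} {xs : EuclideanSpace ℝ (Fin n)}

theorem kaczmarz_sub (hc : ∀ i, c i = mulVecE M xs i) (i : Fin m) (x : EuclideanSpace ℝ (Fin n)) :
    kaczmarz M c i x - xs = (x - xs)
      - (⟪_root_.row M i, x - xs⟫ / ‖_root_.row M i‖ ^ 2) • _root_.row M i := by
  rw [kaczmarz, hc, ← inner_row_eq_mulVecE, inner_sub_right]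
  abel

theorem kaczmarz_sub_mem_rowSpace (hc : ∀ i, c i = mulVecE M xs i) (i : Fin m)
    {x : EuclideanSpace ℝ (Fin n)} (hx : x - xs ∈ rowSpace M) :
    kaczmarz M c i x - xs ∈ rowSpace M := by
  rw [kaczmarz_sub hc]
  exact (rowSpace M).sub_mem hx ((rowSpace M).smul_mem _ (row_mem_rowSpace M i))

theorem sum_row_weight_mul_sq_norm_kaczmarz_sub (hM : M ≠ 0) (hc : ∀ i, c i = mulVecE M xs i)
    (x : EuclideanSpace ℝ (Fin n)) :
    ∑ i, ‖_root_.row M i‖ ^ 2 / frobSq M * ‖kaczmarz M c i x - xs‖ ^ 2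
      = ‖x - xs‖ ^ 2 - ‖mulVecE M (x - xs)‖ ^ 2 / frobSq M := by
  simp only [kaczmarz_sub hc, div_mul_eq_mul_div, sq_norm_mul_sq_norm_sub_inner_div_smul]
  rw [← Finset.sum_div, Finset.sum_sub_distrib, ← Finset.sum_mul, ← frobSq_eq_sum_sq_norm_row,
    ← sq_norm_mulVecE_eq_sum, sub_div, mul_div_cancel_left₀ _ (frobSq_pos hM).ne']

theorem sum_row_weight_mul_sq_norm_kaczmarz_sub_le (hM : M ≠ 0) (hc : ∀ i, c i = mulVecE M xs i)
    {σ : ℝ} (hσ : 0 ≤ σ) (hσM : ∀ z ∈ rowSpace M, σ * ‖z‖ ≤ ‖mulVecE M z‖)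
    {x : EuclideanSpace ℝ (Fin n)} (hx : x - xs ∈ rowSpace M) :
    ∑ i, ‖_root_.row M i‖ ^ 2 / frobSq M * ‖kaczmarz M c i x - xs‖ ^ 2
      ≤ (1 - σ ^ 2 / frobSq M) * ‖x - xs‖ ^ 2 := by
  rw [sum_row_weight_mul_sq_norm_kaczmarz_sub hM hc]
  have h := pow_le_pow_left₀ (by positivity) (hσM _ hx) 2
  rw [mul_pow] at h
  have := div_le_div_of_nonneg_right h (frobSq_pos hM).le
  linarith [show (1 - σ ^ 2 / frobSq M) * ‖x - xs‖ ^ 2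
    = ‖x - xs‖ ^ 2 - σ ^ 2 * ‖x - xs‖ ^ 2 / frobSq M by ring]

theorem sum_prod_row_weights_mul_norm_kaczmarzIter_sub_le (hM : M ≠ 0)
    (hc : ∀ i, c i = mulVecE M xs i) {σ : ℝ} (hσ : 0 ≤ σ)
    (hσM : ∀ z ∈ rowSpace M, σ * ‖z‖ ≤ ‖mulVecE M z‖) (k : ℕ)
    {x0 : EuclideanSpace ℝ (Fin n)} (hx0 : x0 - xs ∈ rowSpace M) :
    ∑ is : Fin k → Fin m,
        (∏ j, ‖_root_.row M (is j)‖ ^ 2 / frobSq M) * ‖kaczmarzIter M c is x0 - xs‖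
      ≤ Real.sqrt ((1 - σ ^ 2 / frobSq M) ^ k) * ‖x0 - xs‖ := by
  have hp : ∀ i, 0 ≤ ‖_root_.row M i‖ ^ 2 / frobSq M := fun i =>
    div_nonneg (sq_nonneg _) (frobSq_pos hM).le
  have hδ : 0 ≤ 1 - σ ^ 2 / frobSq M :=
    sub_nonneg.mpr ((div_le_one (frobSq_pos hM)).mpr (sq_le_frobSq hM hσ hσM))
  have hsq := sum_prod_mul_foldl_le_pow_mul hp (S := {y | y - xs ∈ rowSpace M})
    (V := fun y => ‖y - xs‖ ^ 2) (fun i _ hy => kaczmarz_sub_mem_rowSpace hc i hy) hδ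
    (fun _ hy => sum_row_weight_mul_sq_norm_kaczmarz_sub_le hM hc hσ hσM hy) k hx0
  calc _ ≤ Real.sqrt (∑ is : Fin k → Fin m,
          (∏ j, ‖_root_.row M (is j)‖ ^ 2 / frobSq M) * ‖kaczmarzIter M c is x0 - xs‖ ^ 2) :=
        sum_mul_le_sqrt_sum_mul_sq (fun _ => Finset.prod_nonneg fun j _ => hp _)
          (sum_prod_row_weights_eq_one hM k) _
    _ ≤ Real.sqrt ((1 - σ ^ 2 / frobSq M) ^ k * ‖x0 - xs‖ ^ 2) := Real.sqrt_le_sqrt hsq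
    _ = _ := by rw [Real.sqrt_mul' _ (sq_nonneg _), Real.sqrt_sq (norm_nonneg _)]

end Kaczmarz

section Perturbation

variable {m n : ℕ}

theorem norm_mulVecE_sub_le_of_left_perturbation {E : Matrix (Fin m) (Fin m) ℝ}
    (hE : IsUnit (1 + E)) (B : Matrix (Fin m) (Fin n) ℝ) {x : EuclideanSpace ℝ (Fin n)}
    {b ε : EuclideanSpace ℝ (Fin m)} (hx : mulVecE ((1 + E) * B) x = b + ε) :
    ‖mulVecE B x - b‖ ≤ ‖ε‖ + specNorm ((1 + E)⁻¹ * E) * (‖b‖ + ‖ε‖) := by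
  have hBx : mulVecE B x = (b + ε) - mulVecE ((1 + E)⁻¹ * E) (b + ε) := by
    rw [← one_sub_mulVecE, ← Matrix.inv_one_add_eq_one_sub hE, ← hx, ← mulVecE_mul,
      ← Matrix.mul_assoc, Matrix.nonsing_inv_mul _ ((Matrix.isUnit_iff_isUnit_det _).mp hE),
      Matrix.one_mul]
  calc ‖mulVecE B x - b‖ = ‖ε - mulVecE ((1 + E)⁻¹ * E) (b + ε)‖ := by
        rw [hBx]; congr 1; abel
    _ ≤ ‖ε‖ + specNorm ((1 + E)⁻¹ * E) * ‖b + ε‖ := by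
        linarith [norm_sub_le ε (mulVecE ((1 + E)⁻¹ * E) (b + ε)),
          norm_mulVecE_le ((1 + E)⁻¹ * E) (b + ε)]
    _ ≤ ‖ε‖ + specNorm ((1 + E)⁻¹ * E) * (‖b‖ + ‖ε‖) := by
        gcongr
        · exact norm_nonneg _
        · exact norm_add_le _ _

variable (A : Matrix (Fin m) (Fin n) ℝ) (F : Matrix (Fin n) (Fin n) ℝ)

/-- The component `k` of `u` orthogonal to `range((A (1 + F))ᵀ)` satisfies
`(1 + F) k ∈ ker A ⟂ u`, hence `‖k‖² = ⟪u, k⟫ = -⟪u, F k⟫`. -/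
theorem norm_sub_starProjection_rowSpace_mul_one_add_le {u : EuclideanSpace ℝ (Fin n)}
    (hu : u ∈ rowSpace A) :
    ‖u - (rowSpace (A * (1 + F))).starProjection u‖ ≤ specNorm F * ‖u‖ := by
  set K := rowSpace (A * (1 + F))
  set k := u - K.starProjection u
  have hk : k ∈ Kᗮ := K.sub_starProjection_mem_orthogonal u
  have hFk : mulVecE (1 + F) k ∈ (rowSpace A)ᗮ := by
    rw [mem_orthogonal_rowSpace_iff, ← mulVecE_mul]
    exact (mem_orthogonal_rowSpace_iff _ _).mp hk
  have hinner : ⟪u, k⟫ = -⟪u, mulVecE F k⟫ := by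
    have h := (Submodule.mem_orthogonal _ _).mp hFk u hu
    rw [one_add_mulVecE, inner_add_right] at h
    linarith
  have hsq : ‖k‖ ^ 2 ≤ specNorm F * ‖u‖ * ‖k‖ := by
    calc ‖k‖ ^ 2 = ⟪u - K.starProjection u, k⟫ := (real_inner_self_eq_norm_sq k).symm
      _ = ⟪u, k⟫ := by
          rw [inner_sub_left,
            Submodule.inner_right_of_mem_orthogonal (K.starProjection_apply_mem u) hk, sub_zero]
      _ = ⟪u, -mulVecE F k⟫ := by rw [inner_neg_right, hinner]
      _ ≤ ‖u‖ * ‖mulVecE F k‖ := by rw [← norm_neg (mulVecE F k)]; exact real_inner_le_norm _ _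
      _ ≤ specNorm F * ‖u‖ * ‖k‖ := by
          nlinarith [norm_mulVecE_le F k, norm_nonneg u]
  rcases (norm_nonneg k).eq_or_lt with h0 | hpos
  · rw [← h0]; exact mul_nonneg (norm_nonneg _) (norm_nonneg _)
  · nlinarith

/-- `x` is the projection of `(1 + F)⁻¹ u = u - (1 + F)⁻¹ F u` onto the row space of
`A (1 + F)`. -/
theorem norm_sub_starProjection_le_of_mulVecE_mul_one_add_eq (hF : IsUnit (1 + F))
    {x u : EuclideanSpace ℝ (Fin n)} (hx : x ∈ rowSpace (A * (1 + F)))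
    (hxu : mulVecE (A * (1 + F)) x = mulVecE A u) :
    ‖x - (rowSpace (A * (1 + F))).starProjection u‖ ≤ specNorm ((1 + F)⁻¹ * F) * ‖u‖ := by
  set K := rowSpace (A * (1 + F))
  have hFd := (Matrix.isUnit_iff_isUnit_det _).mp hF
  have hproj : K.starProjection (mulVecE (1 + F)⁻¹ u) = x := by
    refine Submodule.eq_starProjection_of_mem_orthogonal hx ?_
    rw [mem_orthogonal_rowSpace_iff, mulVecE_sub, hxu, ← mulVecE_mul, Matrix.mul_assoc,
      Matrix.mul_nonsing_inv _ hFd, Matrix.mul_one, sub_self]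
  have hdiff : x - K.starProjection u = -K.starProjection (mulVecE ((1 + F)⁻¹ * F) u) := by
    have hinv : mulVecE (1 + F)⁻¹ u = u - mulVecE ((1 + F)⁻¹ * F) u := by
      conv_lhs => rw [Matrix.inv_one_add_eq_one_sub hF, one_sub_mulVecE]
    rw [← hproj, ← map_sub, ← map_neg, hinv]
    congr 1; abel
  rw [hdiff, norm_neg]
  exact (K.norm_starProjection_apply_le _).trans (norm_mulVecE_le _ _)

theorem norm_sub_le_of_right_perturbation (hF : IsUnit (1 + F)) {x u : EuclideanSpace ℝ (Fin n)}
    (hu : u ∈ rowSpace A) (hx : x ∈ rowSpace (A * (1 + F)))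
    (hxu : mulVecE (A * (1 + F)) x = mulVecE A u) :
    ‖x - u‖ ≤ Real.sqrt (specNorm F ^ 2 + specNorm ((1 + F)⁻¹ * F) ^ 2) * ‖u‖ := by
  set K := rowSpace (A * (1 + F))
  have h₁ := norm_sub_starProjection_le_of_mulVecE_mul_one_add_eq A F hF hx hxu
  have h₂ := norm_sub_starProjection_rowSpace_mul_one_add_le A F hu
  have horth : ⟪x - K.starProjection u, K.starProjection u - u⟫ = 0 := by
    refine Submodule.inner_right_of_mem_orthogonal
      (K.sub_mem hx (K.starProjection_apply_mem u)) ?_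
    rw [← neg_sub]
    exact Kᗮ.neg_mem (K.sub_starProjection_mem_orthogonal u)
  have hsq : ‖x - u‖ ^ 2 ≤ (specNorm F ^ 2 + specNorm ((1 + F)⁻¹ * F) ^ 2) * ‖u‖ ^ 2 := by
    rw [← sub_add_sub_cancel x (K.starProjection u) u, norm_add_pow_two_real, horth,
      norm_sub_rev (K.starProjection u)]
    nlinarith [norm_nonneg (x - K.starProjection u), norm_nonneg (u - K.starProjection u)]
  calc ‖x - u‖ = Real.sqrt (‖x - u‖ ^ 2) := (Real.sqrt_sq (norm_nonneg _)).symm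
    _ ≤ _ := Real.sqrt_le_sqrt hsq
    _ = _ := by rw [Real.sqrt_mul' _ (sq_nonneg _), Real.sqrt_sq (norm_nonneg _)]

theorem Matrix.mul_mul_ne_zero_of_isUnit {m n : ℕ} {P : Matrix (Fin m) (Fin m) ℝ}
    {Q : Matrix (Fin n) (Fin n) ℝ} (hP : IsUnit P) (hQ : IsUnit Q) {A : Matrix (Fin m) (Fin n) ℝ}
    (hA : A ≠ 0) : P * A * Q ≠ 0 := by
  intro h
  refine hA ?_
  rw [← Matrix.one_mul A, ← Matrix.nonsing_inv_mul P ((Matrix.isUnit_iff_isUnit_det P).mp hP),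
    ← Matrix.mul_one (P⁻¹ * P * A),
    ← Matrix.mul_nonsing_inv Q ((Matrix.isUnit_iff_isUnit_det Q).mp hQ), ← Matrix.mul_assoc,
    Matrix.mul_assoc P⁻¹ P A, Matrix.mul_assoc P⁻¹ (P * A) Q, h]
  simp

end Perturbation

theorem norm_sub_le_of_multiplicative_perturbation {m n : ℕ} {A : Matrix (Fin m) (Fin n) ℝ}
    {E : Matrix (Fin m) (Fin m) ℝ} {F : Matrix (Fin n) (Fin n) ℝ}
    (hE : IsUnit (1 + E)) (hF : IsUnit (1 + F)) {σ : ℝ} (hσ : 0 < σ)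
    (hσA : ∀ z ∈ rowSpace A, σ * ‖z‖ ≤ ‖mulVecE A z‖)
    {xLS xNLS : EuclideanSpace ℝ (Fin n)} {ε : EuclideanSpace ℝ (Fin m)}
    (hxLS : xLS ∈ rowSpace A) (hxNLS : xNLS ∈ rowSpace ((1 + E) * A * (1 + F)))
    (hNLS : mulVecE ((1 + E) * A * (1 + F)) xNLS = mulVecE A xLS + ε) :
    ‖xNLS - xLS‖ ≤ Real.sqrt (specNorm F ^ 2 + specNorm ((1 + F)⁻¹ * F) ^ 2) * ‖xLS‖
      + (1 + Real.sqrt (specNorm F ^ 2 + specNorm ((1 + F)⁻¹ * F) ^ 2))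
        * ((‖ε‖ + Real.sqrt (specNorm E ^ 2 + specNorm ((1 + E)⁻¹ * E) ^ 2)
          * (‖mulVecE A xLS‖ + ‖ε‖)) / σ) := by
  set sF := Real.sqrt (specNorm F ^ 2 + specNorm ((1 + F)⁻¹ * F) ^ 2)
  set sE := Real.sqrt (specNorm E ^ 2 + specNorm ((1 + E)⁻¹ * E) ^ 2)
  set ρ := ‖ε‖ + sE * (‖mulVecE A xLS‖ + ‖ε‖)
  rw [Matrix.mul_assoc] at hxNLS hNLS
  rw [rowSpace_mul_of_isUnit hE] at hxNLS
  have hres : ‖mulVecE (A * (1 + F)) xNLS - mulVecE A xLS‖ ≤ ρ := by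
    refine (norm_mulVecE_sub_le_of_left_perturbation hE _ hNLS).trans ?_
    have hG : specNorm ((1 + E)⁻¹ * E) ≤ sE :=
      Real.le_sqrt_of_sq_le (le_add_of_nonneg_left (sq_nonneg _))
    have := mul_le_mul_of_nonneg_right hG
      (add_nonneg (norm_nonneg (mulVecE A xLS)) (norm_nonneg ε))
    linarith
  set u := (rowSpace A).starProjection (mulVecE (1 + F) xNLS)
  have hu : u ∈ rowSpace A := (rowSpace A).starProjection_apply_mem _
  have hAu : mulVecE A u = mulVecE (A * (1 + F)) xNLS := by
    rw [mulVecE_starProjection_rowSpace, mulVecE_mul]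
  have hu_sub : ‖u - xLS‖ ≤ ρ / σ := by
    have h := hσA (u - xLS) ((rowSpace A).sub_mem hu hxLS)
    rw [mulVecE_sub, hAu] at h
    rw [le_div_iff₀ hσ]
    linarith
  have hx_sub : ‖xNLS - u‖ ≤ sF * ‖u‖ :=
    norm_sub_le_of_right_perturbation A F hF hu hxNLS hAu.symm
  have hu_norm : ‖u‖ ≤ ‖xLS‖ + ρ / σ := by
    linarith [norm_le_insert' u xLS]
  calc ‖xNLS - xLS‖ ≤ ‖xNLS - u‖ + ‖u - xLS‖ := norm_sub_le_norm_sub_add_norm_sub _ _ _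
    _ ≤ sF * (‖xLS‖ + ρ / σ) + ρ / σ :=
        add_le_add (hx_sub.trans (mul_le_mul_of_nonneg_left hu_norm (Real.sqrt_nonneg _))) hu_sub
    _ = sF * ‖xLS‖ + (1 + sF) * (ρ / σ) := by ring

theorem rk_multiplicative_perturbation_general {m n : ℕ}
    (A : Matrix (Fin m) (Fin n) ℝ)
    (E : Matrix (Fin m) (Fin m) ℝ) (F : Matrix (Fin n) (Fin n) ℝ)
    (hE : IsUnit (1 + E)) (hF : IsUnit (1 + F))
    (Atil : Matrix (Fin m) (Fin n) ℝ)
    (hAtil : Atil = (1 + E) * A * (1 + F))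
    (xLS : EuclideanSpace ℝ (Fin n)) (hxLS : xLS ∈ rowSpace A)
    (hb : mulVecE A xLS ≠ 0)
    (σ : ℝ) (hσ : 0 < σ)
    (hσA : ∀ z ∈ rowSpace A, σ * ‖z‖ ≤ ‖mulVecE A z‖)
    (σt : ℝ) (hσt : 0 < σt)
    (hσtA : ∀ z ∈ rowSpace Atil, σt * ‖z‖ ≤ ‖mulVecE Atil z‖)
    (ε : EuclideanSpace ℝ (Fin m))
    (xNLS : EuclideanSpace ℝ (Fin n))
    (hNLS : mulVecE Atil xNLS = mulVecE A xLS + ε)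
    (hxNLS : xNLS ∈ rowSpace Atil)
    (x0 : EuclideanSpace ℝ (Fin n)) (hx0 : x0 ∈ rowSpace Atil)
    (e₁ e₂ : ℝ)
    (he₁ : e₁ = Real.sqrt (specNorm F ^ 2 + specNorm ((1 + F)⁻¹ * F) ^ 2))
    (he₂ : e₂ = (1 + e₁) * (‖ε‖ / ‖mulVecE A xLS‖
        + (1 + ‖ε‖ / ‖mulVecE A xLS‖) *
            Real.sqrt (specNorm E ^ 2 + specNorm ((1 + E)⁻¹ * E) ^ 2)))
    (k : ℕ) :
    ∑ is : Fin k → Fin m,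
        (∏ j, ‖_root_.row Atil (is j)‖ ^ 2 / frobSq Atil) *
          ‖kaczmarzIter Atil (fun j => mulVecE A xLS j + ε j) is x0 - xLS‖
      ≤ Real.sqrt ((1 - σt ^ 2 / frobSq Atil) ^ k) * ‖x0 - xNLS‖
        + e₁ * ‖xLS‖ + e₂ * ‖mulVecE A xLS‖ / σ := by
  have hAtil0 : Atil ≠ 0 :=
    hAtil ▸ Matrix.mul_mul_ne_zero_of_isUnit hE hF (by rintro rfl; simp [mulVecE] at hb)
  have hconv := sum_prod_row_weights_mul_norm_kaczmarzIter_sub_le hAtil0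
    (c := fun j => mulVecE A xLS j + ε j) (fun i => by rw [hNLS]; rfl) hσt.le hσtA k
    ((rowSpace Atil).sub_mem hx0 hxNLS)
  have hpert := norm_sub_le_of_multiplicative_perturbation hE hF hσ hσA hxLS
    (hAtil ▸ hxNLS) (hAtil ▸ hNLS)
  have he₂b : e₂ * ‖mulVecE A xLS‖ / σ = (1 + e₁) * ((‖ε‖ + Real.sqrt (specNorm E ^ 2
      + specNorm ((1 + E)⁻¹ * E) ^ 2) * (‖mulVecE A xLS‖ + ‖ε‖)) / σ) := by
    have hb' := norm_ne_zero_iff.mpr hb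
    rw [he₂]; field_simp
  have htri := sum_mul_norm_sub_le (fun is => Finset.prod_nonneg fun j _ =>
      div_nonneg (sq_nonneg _) (frobSq_pos hAtil0).le)
    (sum_prod_row_weights_eq_one hAtil0 k)
    (fun is => kaczmarzIter Atil (fun j => mulVecE A xLS j + ε j) is x0) xLS xNLS
  rw [he₂b, he₁]
  linarith

/-- Randomized Kaczmarz under multiplicative noise, via perturbation theory:
`Ã = (I + E) A (I + F)` with `I + E`, `I + F` invertible, `b = A x_LS ≠ 0`,
`b̃ = b + ε`, and the noisy system `Ã x = b̃` consistent with minimum-norm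
solution `x_NLS`. With
`e₁ = √(‖F‖² + ‖(I+F)⁻¹F‖²)` and
`e₂ = (1 + e₁)(‖ε‖/‖b‖ + (1 + ‖ε‖/‖b‖)√(‖E‖² + ‖(I+E)⁻¹E‖²))`,
the expectation `E‖x_k - x_LS‖` (the left-hand side) is bounded by
`(1 - σ̃²/‖Ã‖_F²)^{k/2} ‖x₀ - x_NLS‖ + e₁‖x_LS‖ + e₂‖b‖/σ`. -/
theorem rk_multiplicative_perturbation {m n : ℕ}
    (A : Matrix (Fin m) (Fin n) ℝ)
    (E : Matrix (Fin m) (Fin m) ℝ) (F : Matrix (Fin n) (Fin n) ℝ)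
    (hE : IsUnit (1 + E)) (hF : IsUnit (1 + F))
    (Atil : Matrix (Fin m) (Fin n) ℝ)
    (hAtil : Atil = (1 + E) * A * (1 + F))
    (hrow : ∀ i, _root_.row Atil i ≠ 0)
    (xLS : EuclideanSpace ℝ (Fin n)) (hxLS : xLS ∈ rowSpace A)
    (hb : mulVecE A xLS ≠ 0)
    (σ : ℝ) (hσ : 0 < σ)
    (hσA : ∀ z ∈ rowSpace A, σ * ‖z‖ ≤ ‖mulVecE A z‖)
    (σt : ℝ) (hσt : 0 < σt)
    (hσtA : ∀ z ∈ rowSpace Atil, σt * ‖z‖ ≤ ‖mulVecE Atil z‖)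
    (ε : EuclideanSpace ℝ (Fin m))
    (xNLS : EuclideanSpace ℝ (Fin n))
    (hNLS : mulVecE Atil xNLS = mulVecE A xLS + ε)
    (hxNLS : xNLS ∈ rowSpace Atil)
    (x0 : EuclideanSpace ℝ (Fin n)) (hx0 : x0 ∈ rowSpace Atil)
    (e₁ e₂ : ℝ)
    (he₁ : e₁ = Real.sqrt (specNorm F ^ 2 + specNorm ((1 + F)⁻¹ * F) ^ 2))
    (he₂ : e₂ = (1 + e₁) * (‖ε‖ / ‖mulVecE A xLS‖
        + (1 + ‖ε‖ / ‖mulVecE A xLS‖) *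
            Real.sqrt (specNorm E ^ 2 + specNorm ((1 + E)⁻¹ * E) ^ 2)))
    (k : ℕ) :
    ∑ is : Fin k → Fin m,
        (∏ j, ‖_root_.row Atil (is j)‖ ^ 2 / frobSq Atil) *
          ‖kaczmarzIter Atil (fun j => mulVecE A xLS j + ε j) is x0 - xLS‖
      ≤ Real.sqrt ((1 - σt ^ 2 / frobSq Atil) ^ k) * ‖x0 - xNLS‖
        + e₁ * ‖xLS‖ + e₂ * ‖mulVecE A xLS‖ / σ :=
  rk_multiplicative_perturbation_general A E F hE hF Atil hAtil xLS hxLS hb σ hσ hσA σt hσt hσtA ε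
    xNLS hNLS hxNLS x0 hx0 e₁ e₂ he₁ he₂ k
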